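/- arXiv:2111.00408 — 9 statements merged into one kernel-verified Lean document; each statement's English description precedes it below -/
import Mathlib

section
/- Let x be a prime number with x ≠ 3. Then G(x) = G(x-1) + 1. -/
/-- `G x` is the cardinality of the set `{⌊x/n⌋ : 1 ≤ n ≤ x, ⌊x/n⌋ prime}`. -/
def G (x : ℕ) : ℕ := (((Finset.Icc 1 x).image (fun n => x / n)).filter Nat.Prime).card

lemma pred_div_eq (x n : ℕ) (hx : 1 ≤ x) (h : ¬ n ∣ x) : (x - 1) / n = x / n := by
  obtain ⟨y, rfl⟩ : ∃ y, x = y + 1 := ⟨x - 1, by omega⟩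
  simp [Nat.succ_div, h]

theorem G_prime_succ (x : ℕ) (hx : x.Prime) (hx3 : x ≠ 3) :
    G x = G (x - 1) + 1 := by
  have hx1 : 1 ≤ x := hx.pos
  have hnp : ¬ (x - 1).Prime := by
    intro h
    have h2 : x ≠ 2 := by rintro rfl; exact Nat.not_prime_one h
    obtain ⟨k, hk⟩ := hx.odd_of_ne_two h2
    have he : Even (x - 1) := ⟨k, by omega⟩
    have := (Nat.Prime.even_iff h).mp he
    omega
  have key : (((Finset.Icc 1 x).image (fun n => x / n)).filter Nat.Prime)
      = insert x (((Finset.Icc 1 (x - 1)).image (fun n => (x - 1) / n)).filter Nat.Prime) := by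
    ext p
    simp only [Finset.mem_filter, Finset.mem_image, Finset.mem_insert, Finset.mem_Icc]
    constructor
    · rintro ⟨⟨n, ⟨hn1, hnx⟩, rfl⟩, hp⟩
      by_cases hn : n = 1
      · subst hn; left; simp
      · right
        have hne : n ≠ x := by
          rintro rfl
          rw [Nat.div_self hx1] at hp
          exact Nat.not_prime_one hp
        have hnd : ¬ n ∣ x := by
          intro hd
          rcases hx.eq_one_or_self_of_dvd n hd with h1 | h1 <;> omega
        exact ⟨⟨n, ⟨hn1, by omega⟩, pred_div_eq x n hx1 hnd⟩, hp⟩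
    · rintro (rfl | ⟨⟨n, ⟨hn1, hnx⟩, rfl⟩, hp⟩)
      · exact ⟨⟨1, ⟨le_refl 1, hx1⟩, Nat.div_one _⟩, hx⟩
      · have hn2 : 2 ≤ n := by
          by_contra h
          have hn : n = 1 := by omega
          subst hn
          rw [Nat.div_one] at hp
          exact hnp hp
        have hnd : ¬ n ∣ x := by
          intro hd
          rcases hx.eq_one_or_self_of_dvd n hd with h1 | h1 <;> omega
        exact ⟨⟨n, ⟨hn1, by omega⟩, (pred_div_eq x n hx1 hnd).symm⟩, hp⟩
  have hxnot : x ∉ (((Finset.Icc 1 (x - 1)).image (fun n => (x - 1) / n)).filter Nat.Prime) := by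
    intro hmem
    simp only [Finset.mem_filter, Finset.mem_image, Finset.mem_Icc] at hmem
    obtain ⟨⟨n, ⟨hn1, hnx⟩, hdiv⟩, _⟩ := hmem
    have : (x - 1) / n ≤ x - 1 := Nat.div_le_self _ _
    omega
  rw [G, G, key, Finset.card_insert_of_notMem hxnot]
end

section
/- Let x = p·q where p and q are odd primes, not necessarily distinct. Then G(x) = G(x-1) + 1. -/
/-!
Write `V(x)` for the set of values `⌊x/n⌋`, `1 ≤ n ≤ x`. Since `⌊x/n⌋ = ⌊(x-1)/n⌋` unless `n ∣ x`,
passing from `x - 1` to `x` can only add divisors of `x` to `V` and only remove numbers `d - 1`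
with `d ∣ x`. For `x = pq` with `p ≤ q` odd primes, the prime divisors are `p` and `q`, and the
only prime of the form `d - 1` is `2`, which lies in both sets. Of `p` and `q`, the smaller one
is already `⌊(x-1)/(q-1)⌋` when `p < q`, while the larger one `q = x/p` is missed by `x - 1`:
`⌊(x-1)/n⌋ ≥ q` forces `n < p`, and then `⌊(x-1)/n⌋ ≥ q + 1`.
-/

def floorQuotients (x : ℕ) : Finset ℕ := (Finset.Icc 1 x).image (x / ·)

theorem G_eq_card_filter_prime (x : ℕ) : G x = ((floorQuotients x).filter Nat.Prime).card := rfl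

namespace floorQuotients

variable {d v m x : ℕ}

theorem mem_iff : v ∈ floorQuotients x ↔ ∃ n, 1 ≤ n ∧ n ≤ x ∧ x / n = v := by
  simp [floorQuotients, and_assoc]

theorem mem_of_mul_eq (h : d * v = x) (hx : 0 < x) : v ∈ floorQuotients x := by
  have hd : 0 < d := Nat.pos_of_mul_pos_right (h ▸ hx)
  have hv : 0 < v := Nat.pos_of_mul_pos_left (h ▸ hx)
  exact mem_iff.2 ⟨d, hd, h ▸ Nat.le_mul_of_pos_right d hv, h ▸ Nat.mul_div_cancel_left v hd⟩

theorem two_mem (hx : 4 ≤ x) : 2 ∈ floorQuotients x :=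
  mem_iff.2 ⟨x / 2, by omega, by omega, Nat.div_eq_of_lt_le (by omega) (by omega)⟩

theorem mem_of_mem_succ (hv : v ∈ floorQuotients (m + 1)) (hvd : ¬ v ∣ m + 1) :
    v ∈ floorQuotients m := by
  obtain ⟨n, hn1, hnm, rfl⟩ := mem_iff.1 hv
  have hnd : ¬ n ∣ m + 1 := fun hnd => hvd (Nat.div_dvd_of_dvd hnd)
  have hn_ne : n ≠ m + 1 := fun h => hnd (h ▸ dvd_refl _)
  exact mem_iff.2 ⟨n, hn1, by omega, (Nat.succ_div_of_not_dvd hnd).symm⟩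

theorem mem_succ_of_mem (hv : v ∈ floorQuotients m) (hvd : ¬ (v + 1) ∣ m + 1) :
    v ∈ floorQuotients (m + 1) := by
  obtain ⟨n, hn1, hnm, rfl⟩ := mem_iff.1 hv
  have hnd : ¬ n ∣ m + 1 := fun hnd => hvd (Nat.succ_div_of_dvd hnd ▸ Nat.div_dvd_of_dvd hnd)
  exact mem_iff.2 ⟨n, hn1, by omega, Nat.succ_div_of_not_dvd hnd⟩

theorem notMem_of_mul_eq_succ (h : d * v = m + 1) (hdv : d ≤ v) : v ∉ floorQuotients m := by
  intro hv
  obtain ⟨n, hn1, -, hmn⟩ := mem_iff.1 hv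
  have hlo : v * n ≤ m := hmn ▸ Nat.div_mul_le_self m n
  have hhi : m < n * (v + 1) := hmn ▸ Nat.lt_mul_div_succ m hn1
  have hnd : n < d := by nlinarith
  nlinarith

theorem mem_of_mul_eq_succ (h : d * v = m + 1) (hv : 0 < v) (hvd : v < d) :
    v ∈ floorQuotients m := by
  obtain ⟨e, rfl⟩ : ∃ e, d = e + 1 := ⟨d - 1, by omega⟩
  exact mem_iff.2 ⟨e, by omega, by nlinarith, Nat.div_eq_of_lt_le (by nlinarith) (by nlinarith)⟩

end floorQuotients

open floorQuotients in
theorem filter_prime_floorQuotients_of_mul_eq_succ {p q m : ℕ} (hp : p.Prime) (hq : q.Prime)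
    (hop : Odd p) (hoq : Odd q) (hpq : p ≤ q) (hm : p * q = m + 1) :
    (floorQuotients (m + 1)).filter Nat.Prime = insert q ((floorQuotients m).filter Nat.Prime) := by
  have hp3 : 3 ≤ p := by have := hp.two_le; rcases hop with ⟨k, rfl⟩; omega
  have hq3 : 3 ≤ q := by have := hq.two_le; rcases hoq with ⟨k, rfl⟩; omega
  have hm9 : 9 ≤ m + 1 := hm ▸ Nat.mul_le_mul hp3 hq3
  ext v
  simp only [Finset.mem_filter, Finset.mem_insert]
  constructor
  · rintro ⟨hv, hvp⟩
    by_cases hvd : v ∣ m + 1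
    · rcases (Nat.Prime.dvd_mul hvp).1 (hm ▸ hvd) with hvd | hvd
      · obtain rfl := (Nat.prime_dvd_prime_iff_eq hvp hp).1 hvd
        rcases hpq.eq_or_lt with rfl | hlt
        · exact Or.inl rfl
        · exact Or.inr ⟨mem_of_mul_eq_succ (mul_comm v q ▸ hm) hp.pos hlt, hvp⟩
      · exact Or.inl ((Nat.prime_dvd_prime_iff_eq hvp hq).1 hvd)
    · exact Or.inr ⟨mem_of_mem_succ hv hvd, hvp⟩
  · rintro (rfl | ⟨hv, hvp⟩)
    · exact ⟨mem_of_mul_eq hm (by omega), hq⟩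
    · refine ⟨?_, hvp⟩
      by_cases hvd : (v + 1) ∣ m + 1
      · have hodd : Odd (v + 1) := (hm ▸ hop.mul hoq).of_dvd_nat hvd
        obtain rfl : v = 2 := hvp.even_iff.1 (by simpa [Nat.odd_add_one] using hodd)
        exact two_mem (by omega)
      · exact mem_succ_of_mem hv hvd

theorem G_semiprime (p q x : ℕ) (hp : p.Prime) (hq : q.Prime)
    (hop : Odd p) (hoq : Odd q) (hx : x = p * q) :
    G x = G (x - 1) + 1 := by
  wlog hpq : p ≤ q generalizing p q
  · exact this q p hq hp hoq hop (hx.trans (mul_comm p q)) (le_of_not_ge hpq)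
  obtain ⟨m, rfl⟩ : ∃ m, x = m + 1 := ⟨x - 1, by have := Nat.mul_pos hp.pos hq.pos; omega⟩
  have hm : p * q = m + 1 := hx.symm
  rw [Nat.add_sub_cancel, G_eq_card_filter_prime, G_eq_card_filter_prime,
    filter_prime_floorQuotients_of_mul_eq_succ hp hq hop hoq hpq hm,
    Finset.card_insert_of_notMem fun h => floorQuotients.notMem_of_mul_eq_succ hm hpq
      (Finset.mem_filter.1 h).1]
end

section
/- There is a constant C > 0 such that for all positive integers x, |F(x) - P·x| ≤ C·x^{1/2}, i.e. F(x) = P·x + O(x^{1/2}). -/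
open Finset Real

/-- `F x` is the cardinality of the set `{n : 1 ≤ n ≤ x, ⌊x/n⌋ prime}`. -/
def F (x : ℕ) : ℕ := ((Finset.Icc 1 x).filter (fun n => Nat.Prime (x / n))).card

/-- `P = Σ_{p prime} 1/(p(p+1))`. -/
noncomputable def P : ℝ := ∑' p : Nat.Primes, 1 / ((p : ℝ) * ((p : ℝ) + 1))

/-!
Group the `n ≤ x` by the value `p = ⌊x/n⌋`: a given `p ≥ 1` is taken by exactly
`⌊x/p⌋ - ⌊x/(p+1)⌋` values of `n`, which is `x/(p(p+1))` up to an error of at most `1`.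
Summing over the primes `p ≤ N` costs an error of at most `N + 1`. The remaining `n`, those with
`⌊x/n⌋ > N`, satisfy `n ≤ x/(N+1)`, and the primes `p > N` contribute at most
`x ∑_{m > N} 1/(m(m+1)) = x/(N+1)` to `P x`. Taking `N = ⌊√x⌋` balances the two errors.
-/

lemma Nat.div_eq_iff_mem_Ioc {x p : ℕ} (hp : 0 < p) (n : ℕ) :
    x / n = p ↔ n ∈ Ioc (x / (p + 1)) (x / p) := by
  rw [mem_Ioc, Nat.div_lt_iff_lt_mul p.succ_pos, Nat.le_div_iff_mul_le hp]
  rcases n.eq_zero_or_pos with rfl | hn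
  · simp [hp.ne]
  · rw [le_antisymm_iff, ← Nat.lt_add_one_iff, Nat.div_lt_iff_lt_mul hn, Nat.le_div_iff_mul_le hn,
      mul_comm n, mul_comm n]

lemma card_filter_div_eq (x : ℕ) {p : ℕ} (hp : 0 < p) :
    #{n ∈ Icc 1 x | x / n = p} = x / p - x / (p + 1) := by
  have hfiber : {n ∈ Icc 1 x | x / n = p} = Ioc (x / (p + 1)) (x / p) := by
    ext n
    rw [mem_filter, Nat.div_eq_iff_mem_Ioc hp, and_iff_right_of_imp]
    intro hn
    obtain ⟨hlo, hhi⟩ := mem_Ioc.1 hn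
    exact mem_Icc.2 ⟨Nat.one_le_of_lt hlo, hhi.trans (Nat.div_le_self x p)⟩
  rw [hfiber, Nat.card_Ioc]

lemma card_filter_lt_div_le (x N : ℕ) : #{n ∈ Icc 1 x | N < x / n} ≤ x / (N + 1) := by
  calc #{n ∈ Icc 1 x | N < x / n} ≤ #(Icc 1 (x / (N + 1))) := by
        refine card_le_card fun n hn => ?_
        rw [mem_filter, mem_Icc] at hn
        obtain ⟨⟨hn1, -⟩, hN⟩ := hn
        rw [mem_Icc, Nat.le_div_iff_mul_le N.succ_pos, mul_comm]
        exact ⟨hn1, (Nat.le_div_iff_mul_le hn1).1 hN⟩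
    _ = x / (N + 1) := by rw [Nat.card_Icc, Nat.add_sub_cancel]

lemma F_eq_card_add_sum (x N : ℕ) :
    F x = #{n ∈ Icc 1 x | (x / n).Prime ∧ N < x / n}
      + ∑ p ∈ Nat.primesBelow (N + 1), (x / p - x / (p + 1)) := by
  rw [F, ← card_filter_add_card_filter_not (fun n => N < x / n), filter_filter, filter_filter]
  congr 1
  rw [card_eq_sum_card_fiberwise (f := (x / ·)) (t := Nat.primesBelow (N + 1))]
  · refine sum_congr rfl fun p hp => ?_
    rw [Nat.mem_primesBelow] at hp
    rw [filter_filter, ← card_filter_div_eq x hp.2.pos]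
    congr 1
    refine filter_congr fun n _ => ⟨fun h => h.2, fun h => ⟨⟨h ▸ hp.2, ?_⟩, h⟩⟩
    omega
  · intro n hn
    simp only [coe_filter, Set.mem_ofPred_eq, not_lt] at hn
    exact Nat.mem_primesBelow.2 ⟨Nat.lt_succ_of_le hn.2.2, hn.2.1⟩

noncomputable def invMulSucc (n : ℕ) : ℝ := 1 / (n * (n + 1))

lemma invMulSucc_nonneg (n : ℕ) : 0 ≤ invMulSucc n := by
  unfold invMulSucc; positivity

lemma invMulSucc_eq_sub {n : ℕ} (hn : 0 < n) : invMulSucc n = 1 / n - 1 / (n + 1) := by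
  have : (n : ℝ) ≠ 0 := by positivity
  unfold invMulSucc
  field_simp
  ring

lemma sum_range_invMulSucc_add_le {M : ℕ} (hM : 0 < M) (n : ℕ) :
    ∑ i ∈ range n, invMulSucc (i + M) ≤ 1 / M := by
  have htel : ∑ i ∈ range n, invMulSucc (i + M)
      = ∑ i ∈ range n, (1 / ((i + M : ℕ) : ℝ) - 1 / ((i + 1 + M : ℕ) : ℝ)) := by
    refine sum_congr rfl fun i _ => ?_
    rw [invMulSucc_eq_sub (by omega)]
    push_cast
    ring_nf
  rw [htel, sum_range_sub' (fun i => 1 / ((i + M : ℕ) : ℝ)), zero_add, sub_le_self_iff]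
  positivity

section

variable (s : Set ℕ)

lemma sum_range_indicator_invMulSucc_add_le {M : ℕ} (hM : 0 < M) (n : ℕ) :
    ∑ i ∈ range n, s.indicator invMulSucc (i + M) ≤ 1 / M := by
  refine (sum_le_sum fun i _ => ?_).trans (sum_range_invMulSucc_add_le hM n)
  exact Set.indicator_le_self' (fun m _ => invMulSucc_nonneg m) (i + M)

lemma summable_indicator_invMulSucc : Summable (s.indicator invMulSucc) :=
  (summable_nat_add_iff 1).1 <| summable_of_sum_range_le
    (fun _ => Set.indicator_nonneg (fun m _ => invMulSucc_nonneg m) _)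
    (sum_range_indicator_invMulSucc_add_le s one_pos)

lemma tsum_indicator_invMulSucc_add_le {M : ℕ} (hM : 0 < M) :
    ∑' n, s.indicator invMulSucc (n + M) ≤ 1 / M :=
  Real.tsum_le_of_sum_range_le (fun _ => Set.indicator_nonneg (fun m _ => invMulSucc_nonneg m) _)
    (sum_range_indicator_invMulSucc_add_le s hM)

end

lemma P_mul_eq (x N : ℕ) :
    P * x = ∑ p ∈ Nat.primesBelow (N + 1), x * invMulSucc p
      + x * ∑' n, {p | p.Prime}.indicator invMulSucc (n + (N + 1)) := by
  have hP : P = ∑' n, {p | p.Prime}.indicator invMulSucc n := tsum_subtype _ invMulSucc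
  rw [hP, ← (summable_indicator_invMulSucc _).sum_add_tsum_nat_add (N + 1), mul_comm, mul_add,
    mul_sum, Nat.primesBelow, sum_filter]
  congr 1
  refine sum_congr rfl fun n _ => ?_
  by_cases hn : n.Prime <;> simp [hn]

lemma abs_natFloor_sub_natFloor_sub_le {a b : ℝ} (hb : 0 ≤ b) (hba : b ≤ a) :
    |((⌊a⌋₊ - ⌊b⌋₊ : ℕ) : ℝ) - (a - b)| ≤ 1 := by
  rw [Nat.cast_sub (Nat.floor_le_floor hba), abs_le]
  have := Nat.floor_le hb
  have := Nat.floor_le (hb.trans hba)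
  have := Nat.lt_floor_add_one a
  have := Nat.lt_floor_add_one b
  constructor <;> linarith

lemma abs_div_sub_div_sub_mul_invMulSucc_le (x : ℕ) {p : ℕ} (hp : 0 < p) :
    |((x / p - x / (p + 1) : ℕ) : ℝ) - x * invMulSucc p| ≤ 1 := by
  have hsub : (x : ℝ) * invMulSucc p = x / p - x / ((p + 1 : ℕ) : ℝ) := by
    rw [invMulSucc_eq_sub hp]; push_cast; ring
  rw [hsub, ← Nat.floor_div_eq_div (K := ℝ) x p, ← Nat.floor_div_eq_div (K := ℝ) x (p + 1)]
  exact abs_natFloor_sub_natFloor_sub_le (by positivity)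
    (div_le_div_of_nonneg_left x.cast_nonneg (by exact_mod_cast hp) (by simp))

lemma abs_F_sub_P_mul_le (x N : ℕ) : |(F x : ℝ) - P * x| ≤ x / (N + 1) + (N + 1) := by
  set L := #{n ∈ Icc 1 x | (x / n).Prime ∧ N < x / n}
  set T := (x : ℝ) * ∑' n, {p | p.Prime}.indicator invMulSucc (n + (N + 1))
  have hL : (L : ℝ) ≤ x / (N + 1) := by
    have hsub : L ≤ #{n ∈ Icc 1 x | N < x / n} := card_le_card fun n hn => by
      rw [mem_filter] at hn ⊢
      exact ⟨hn.1, hn.2.2⟩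
    exact (Nat.cast_le.2 (hsub.trans (card_filter_lt_div_le x N))).trans
      (by exact_mod_cast Nat.cast_div_le)
  have hT : 0 ≤ T ∧ T ≤ x / (N + 1) := by
    refine ⟨mul_nonneg x.cast_nonneg (tsum_nonneg fun _ => ?_), ?_⟩
    · exact Set.indicator_nonneg (fun m _ => invMulSucc_nonneg m) _
    · have := tsum_indicator_invMulSucc_add_le {p | p.Prime} N.succ_pos
      push_cast at this
      calc T ≤ x * (1 / (N + 1)) := mul_le_mul_of_nonneg_left this x.cast_nonneg
        _ = x / (N + 1) := mul_one_div _ _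
  have hsum : |∑ p ∈ Nat.primesBelow (N + 1), (((x / p - x / (p + 1) : ℕ) : ℝ) - x * invMulSucc p)|
      ≤ N + 1 := by
    calc _ ≤ ∑ p ∈ Nat.primesBelow (N + 1), (1 : ℝ) :=
          (abs_sum_le_sum_abs _ _).trans <| sum_le_sum fun p hp =>
            abs_div_sub_div_sub_mul_invMulSucc_le x (Nat.prime_of_mem_primesBelow hp).pos
      _ ≤ N + 1 := by
          rw [sum_const, nsmul_one]
          exact_mod_cast (card_filter_le _ _).trans (card_range _).le
  have hsplit : (F x : ℝ) - P * x
      = (L - T)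
        + ∑ p ∈ Nat.primesBelow (N + 1), (((x / p - x / (p + 1) : ℕ) : ℝ) - x * invMulSucc p) := by
    rw [F_eq_card_add_sum x N, P_mul_eq x N, sum_sub_distrib]
    push_cast
    ring
  rw [hsplit]
  refine (abs_add_le _ _).trans (add_le_add ?_ hsum)
  exact abs_sub_le_iff.2 ⟨by linarith, by linarith⟩

theorem F_asymptotic :
    ∃ C > (0:ℝ), ∀ x : ℕ, 0 < x →
      |(F x : ℝ) - P * x| ≤ C * (x : ℝ) ^ ((1:ℝ)/2) := by
  refine ⟨4, by norm_num, fun x hx => ?_⟩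
  set N := Nat.sqrt x
  have hN : (N : ℝ) ≤ √x := Real.nat_sqrt_le_real_sqrt
  have hx1 : 1 ≤ √(x : ℝ) := Real.one_le_sqrt.2 (by exact_mod_cast hx)
  have hxN : (x : ℝ) / (N + 1) ≤ N + 1 := by
    rw [div_le_iff₀ (by positivity)]
    exact_mod_cast (Nat.lt_succ_sqrt x).le
  rw [← Real.sqrt_eq_rpow]
  linarith [abs_F_sub_P_mul_le x N]
end

section
/- There is a constant C > 0 such that for all positive integers x, the cardinality of the set {n : 1 ≤ n ≤ x, ⌊x/n⌋ is a prime power} differs from D·x by at most C·x^{1/2}, where D = Σ 1/(m(m+1)) summed over all prime powers m = p^k with p prime and k ≥ 1. That is, |{n : 1 ≤ n ≤ x, ⌊x/n⌋ is a prime power}| = D·x + O(x^{1/2}). -/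
/-!
For `m ≥ 1` the equation `⌊x/n⌋ = m` has exactly `⌊x/m⌋ - ⌊x/(m+1)⌋ = x/(m(m+1)) + O(1)`
solutions `n ∈ [1, x]`, so the `n` with `⌊x/n⌋ ≤ √x` lying in a set `P` number
`x · Σ_{m ≤ √x, m ∈ P} 1/(m(m+1)) + O(√x)`. The remaining `n` satisfy `n ≤ x/(√x + 1) < √x + 1`,
and the tail `Σ_{m > √x} 1/(m(m+1)) ≤ 1/√x` of the series costs another `O(√x)`.
Nothing about prime powers is used.
-/

open Finset Real

open scoped Classical in
/-- `Fpp x` is the cardinality of the set `{n : 1 ≤ n ≤ x, ⌊x/n⌋ is a prime power}`. -/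
noncomputable def Fpp (x : ℕ) : ℕ :=
  ((Finset.Icc 1 x).filter (fun n => IsPrimePow (x / n))).card

open scoped Classical in
/-- `D = Σ_{m a prime power} 1/(m(m+1))`. -/
noncomputable def D : ℝ :=
  ∑' m : ℕ, if IsPrimePow m then 1 / ((m : ℝ) * ((m : ℝ) + 1)) else 0

namespace Nat

theorem filter_le_div_eq_Icc {k : ℕ} (hk : 0 < k) (x : ℕ) :
    {n ∈ Icc 1 x | k ≤ x / n} = Icc 1 (x / k) := by
  ext n
  simp only [mem_filter, mem_Icc]
  constructor
  · rintro ⟨⟨hn, -⟩, hkn⟩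
    rw [le_div_iff_mul_le hk, mul_comm, ← le_div_iff_mul_le hn]
    exact ⟨hn, hkn⟩
  · rintro ⟨hn, hnk⟩
    refine ⟨⟨hn, hnk.trans (div_le_self x k)⟩, ?_⟩
    rwa [le_div_iff_mul_le hn, mul_comm, ← le_div_iff_mul_le hk]

theorem card_filter_div_eq {m : ℕ} (hm : 0 < m) (x : ℕ) :
    #{n ∈ Icc 1 x | x / n = m} = x / m - x / (m + 1) := by
  have hfib : {n ∈ Icc 1 x | x / n = m} =
      {n ∈ Icc 1 x | m ≤ x / n} \ {n ∈ Icc 1 x | m + 1 ≤ x / n} := by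
    ext n
    simp only [mem_filter, mem_sdiff, mem_Icc]
    omega
  rw [hfib, card_sdiff_of_subset (monotone_filter_right _ fun n h => by omega),
    filter_le_div_eq_Icc hm, filter_le_div_eq_Icc m.add_one_pos, card_Icc, card_Icc,
    Nat.add_sub_cancel, Nat.add_sub_cancel]

theorem abs_cast_div_sub_div_sub_le_one {m : ℕ} (hm : 0 < m) (x : ℕ) :
    |((x / m - x / (m + 1) : ℕ) : ℝ) - x * (1 / (m * (m + 1)))| ≤ 1 := by
  have hm' : (0 : ℝ) < m := by exact_mod_cast hm
  have hsplit : (x : ℝ) * (1 / (m * (m + 1))) = x / m - x / (m + 1) := by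
    field_simp
    ring
  have floor_bounds (k : ℕ) (hk : 0 < k) :
      (x : ℝ) / k - 1 < (x / k : ℕ) ∧ ((x / k : ℕ) : ℝ) ≤ x / k := by
    rw [← floor_div_eq_div (K := ℝ)]
    exact ⟨sub_one_lt_floor _, floor_le (by positivity)⟩
  obtain ⟨h₁, h₂⟩ := floor_bounds m hm
  obtain ⟨h₃, h₄⟩ := floor_bounds (m + 1) m.add_one_pos
  push_cast at h₃ h₄
  rw [cast_sub (div_le_div_left (m.le_add_right 1) hm), hsplit, abs_le]
  constructor <;> linarith

variable (P : ℕ → Prop) [DecidablePred P]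

theorem card_filter_div_le_eq_sum (x y : ℕ) :
    #{n ∈ Icc 1 x | P (x / n) ∧ x / n ≤ y} = ∑ m ∈ Icc 1 y with P m, (x / m - x / (m + 1)) := by
  rw [card_eq_sum_card_fiberwise (f := (x / ·)) (t := {m ∈ Icc 1 y | P m})]
  · refine sum_congr rfl fun m hm => ?_
    obtain ⟨⟨hm₁, hmy⟩, hPm⟩ := mem_filter.mp hm |>.imp_left mem_Icc.mp
    rw [filter_filter, ← card_filter_div_eq hm₁]
    congr 1
    exact filter_congr fun n _ => ⟨And.right, fun h => ⟨h ▸ ⟨hPm, hmy⟩, h⟩⟩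
  · intro n hn
    simp only [coe_filter, mem_Icc, Set.mem_ofPred_eq] at hn ⊢
    exact ⟨⟨Nat.div_pos hn.1.2 hn.1.1, hn.2.2⟩, hn.2.1⟩

theorem card_filter_lt_div_le (x y : ℕ) :
    #{n ∈ Icc 1 x | P (x / n) ∧ ¬ x / n ≤ y} ≤ x / (y + 1) := by
  calc #{n ∈ Icc 1 x | P (x / n) ∧ ¬ x / n ≤ y}
      ≤ #{n ∈ Icc 1 x | y + 1 ≤ x / n} := card_le_card (monotone_filter_right _ fun n h => by omega)
    _ = x / (y + 1) := by rw [filter_le_div_eq_Icc y.add_one_pos, card_Icc, Nat.add_sub_cancel]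

end Nat

section FloorDivWeight

variable (P : ℕ → Prop) [DecidablePred P]

noncomputable def floorDivWeight (m : ℕ) : ℝ :=
  if P m then 1 / (m * (m + 1)) else 0

theorem floorDivWeight_nonneg (m : ℕ) : 0 ≤ floorDivWeight P m := by
  unfold floorDivWeight
  split_ifs <;> positivity

theorem floorDivWeight_le_sub {m : ℕ} (hm : 0 < m) :
    floorDivWeight P m ≤ 1 / m - 1 / (m + 1) := by
  have hm' : (0 : ℝ) < m := by exact_mod_cast hm
  have hsub : (0 : ℝ) ≤ 1 / m - 1 / (m + 1) := sub_nonneg.mpr (by gcongr; linarith)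
  unfold floorDivWeight
  split_ifs
  · exact le_of_eq (by field_simp; ring)
  · exact hsub

theorem sum_range_floorDivWeight_add_le {k : ℕ} (hk : 0 < k) (n : ℕ) :
    ∑ i ∈ range n, floorDivWeight P (i + k) ≤ 1 / k := by
  set g : ℕ → ℝ := fun i => 1 / ((i + k : ℕ) : ℝ)
  calc ∑ i ∈ range n, floorDivWeight P (i + k)
      ≤ ∑ i ∈ range n, (g i - g (i + 1)) := sum_le_sum fun i _ => by
        simpa [g, add_right_comm] using floorDivWeight_le_sub P (m := i + k) (by omega)
    _ = g 0 - g n := sum_range_sub' g n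
    _ ≤ 1 / k := by simp only [g, zero_add, sub_le_self_iff]; positivity

theorem summable_floorDivWeight : Summable (floorDivWeight P) :=
  (summable_nat_add_iff 1).mp <| summable_of_sum_range_le (fun _ => floorDivWeight_nonneg P _)
    (sum_range_floorDivWeight_add_le P one_pos)

theorem tsum_floorDivWeight_add_le {k : ℕ} (hk : 0 < k) :
    ∑' i, floorDivWeight P (i + k) ≤ 1 / k :=
  Real.tsum_le_of_sum_range_le (fun _ => floorDivWeight_nonneg P _)
    (sum_range_floorDivWeight_add_le P hk)

theorem tsum_floorDivWeight_eq (y : ℕ) :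
    ∑' m, floorDivWeight P m =
      ∑ m ∈ Icc 1 y, floorDivWeight P m + ∑' i, floorDivWeight P (i + (y + 1)) := by
  rw [← (summable_floorDivWeight P).sum_add_tsum_nat_add (y + 1), range_eq_Ico,
    sum_eq_sum_Ico_succ_bot y.add_one_pos, Ico_add_one_right_eq_Icc]
  simp [floorDivWeight]

theorem abs_sum_div_sub_div_sub_sum_floorDivWeight_le (x y : ℕ) :
    |∑ m ∈ Icc 1 y with P m, ((x / m - x / (m + 1) : ℕ) : ℝ) -
        x * ∑ m ∈ Icc 1 y, floorDivWeight P m| ≤ y := by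
  simp only [floorDivWeight, ← sum_filter, mul_sum, ← sum_sub_distrib]
  calc _ ≤ ∑ m ∈ Icc 1 y with P m, (1 : ℝ) := (abs_sum_le_sum_abs _ _).trans <|
        sum_le_sum fun m hm =>
          Nat.abs_cast_div_sub_div_sub_le_one (mem_Icc.mp (mem_filter.mp hm).1).1 x
    _ ≤ y := by
        rw [sum_const, nsmul_one]
        exact_mod_cast (card_filter_le _ _).trans (Nat.card_Icc 1 y).le

theorem abs_card_filter_div_sub_tsum_floorDivWeight_mul_le (x : ℕ) :
    |(#{n ∈ Icc 1 x | P (x / n)} : ℝ) - (∑' m, floorDivWeight P m) * x| ≤ 2 * x.sqrt + 1 := by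
  set y := x.sqrt
  have hcard : #{n ∈ Icc 1 x | P (x / n)} =
      #{n ∈ Icc 1 x | P (x / n) ∧ x / n ≤ y} + #{n ∈ Icc 1 x | P (x / n) ∧ ¬ x / n ≤ y} := by
    rw [← card_filter_add_card_filter_not (fun n => x / n ≤ y), filter_filter, filter_filter]
  have hlarge : (#{n ∈ Icc 1 x | P (x / n) ∧ ¬ x / n ≤ y} : ℝ) ≤ y := by
    exact_mod_cast (Nat.card_filter_lt_div_le P x y).trans
      (Nat.lt_succ_iff.mp (Nat.div_lt_of_lt_mul (Nat.lt_succ_sqrt x)))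
  have hsmall := abs_sum_div_sub_div_sub_sum_floorDivWeight_le P x y
  have htail : (∑' i, floorDivWeight P (i + (y + 1))) * x ≤ y + 1 := by
    have hx : (x : ℝ) ≤ (y + 1) * (y + 1) := by exact_mod_cast (Nat.lt_succ_sqrt x).le
    calc (∑' i, floorDivWeight P (i + (y + 1))) * x ≤ 1 / (y + 1 : ℕ) * x := by
          gcongr; exact tsum_floorDivWeight_add_le P y.add_one_pos
      _ ≤ y + 1 := by
          rw [one_div_mul_eq_div, div_le_iff₀ (by positivity)]; push_cast; exact hx
  have htail₀ : 0 ≤ (∑' i, floorDivWeight P (i + (y + 1))) * x :=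
    mul_nonneg (tsum_nonneg fun _ => floorDivWeight_nonneg P _) x.cast_nonneg
  rw [tsum_floorDivWeight_eq P y, hcard, Nat.card_filter_div_le_eq_sum, Nat.cast_add,
    Nat.cast_sum]
  rw [abs_le] at hsmall ⊢
  constructor <;> linarith

end FloorDivWeight

theorem primePow_floor_count_asymptotic :
    ∃ C > (0:ℝ), ∀ x : ℕ, 0 < x →
      |(Fpp x : ℝ) - D * x| ≤ C * (x : ℝ) ^ ((1:ℝ)/2) := by
  refine ⟨3, by norm_num, fun x hx => ?_⟩
  have hsqrt : (x.sqrt : ℝ) ≤ √x := Real.nat_sqrt_le_real_sqrt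
  have hone : 1 ≤ √(x : ℝ) := Real.one_le_sqrt.mpr (by exact_mod_cast hx)
  have hFpp : Fpp x = #{n ∈ Icc 1 x | IsPrimePow (x / n)} := by unfold Fpp; congr
  have hD : D = ∑' m, floorDivWeight IsPrimePow m := by unfold D floorDivWeight; congr
  rw [← Real.sqrt_eq_rpow, hFpp, hD]
  linarith [abs_card_filter_div_sub_tsum_floorDivWeight_mul_le IsPrimePow x]
end

section
/- Let f be a complex-valued arithmetic function, and suppose there are constants α ∈ [0,1), θ ≥ 0 and K > 0 such that |f(n)| ≤ K·n^α·(log n)^θ for all n ≥ 2. Then there is a constant C > 0 (depending on f, α, θ) such that for all integers x ≥ 2, |Σ_{n ≤ x} f(⌊x/n⌋) − x·Σ_{n=1}^∞ f(n)/(n(n+1))| ≤ C·x^{(α+1)/2}·(log x)^θ. -/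
open Finset Real

/-!
Hyperbola method at `y = ⌊√x⌋`. The `n ≤ x` with `⌊x/n⌋ ≤ y` are grouped by the value
`m = ⌊x/n⌋`, which occurs `⌊x/m⌋ - ⌊x/(m+1)⌋ = x/(m(m+1)) + O(1)` times; the other `n` satisfy
`n ≤ y`. Subtracting `x ∑ f(m)/(m(m+1))` leaves three error terms, each
`O(x^((α+1)/2) (log x)^θ)`:
* `∑_{n ≤ y} |f(⌊x/n⌋)| ≤ K x^α (log x)^θ ∑_{n ≤ y} n^(-α) ≪ x^α y^(1-α) (log x)^θ`;
* the `O(1)` defects, contributing `∑_{m ≤ y} |f(m)| ≪ y^(1+α) (log x)^θ`;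
* the tail `x ∑_{m > y} |f(m)|/m²`, which is `≪ x y^(α-1) (log x)^θ` because
  `log m ≪_δ log x · (m/y)^δ` for all `m ≥ y`, including `m > x`.
-/

namespace WuZhai

theorem filter_div_eq_eq_Ioc {x m : ℕ} (hm : 1 ≤ m) :
    (Icc 1 x).filter (fun n => x / n = m) = Ioc (x / (m + 1)) (x / m) := by
  ext n
  simp only [mem_filter, mem_Icc, mem_Ioc]
  rcases Nat.eq_zero_or_pos n with rfl | hn
  · simp
  have key : ∀ k, 1 ≤ k → (k ≤ x / n ↔ n ≤ x / k) := fun k hk => by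
    rw [Nat.le_div_iff_mul_le hn, Nat.le_div_iff_mul_le hk, mul_comm]
  have h1 := key m hm
  have h2 := key (m + 1) (by omega)
  have h3 : x / m ≤ x := Nat.div_le_self x m
  omega

theorem sum_filter_div_le_eq {M : Type*} [AddCommMonoid M] (g : ℕ → M) (x y : ℕ) :
    ∑ n ∈ (Icc 1 x).filter (fun n => x / n ≤ y), g (x / n)
      = ∑ m ∈ Icc 1 y, (x / m - x / (m + 1)) • g m := by
  have hmaps : ∀ n ∈ (Icc 1 x).filter (fun n => x / n ≤ y), x / n ∈ Icc 1 y := by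
    intro n hn
    simp only [mem_filter, mem_Icc] at hn ⊢
    exact ⟨Nat.div_pos hn.1.2 hn.1.1, hn.2⟩
  rw [← sum_fiberwise_of_maps_to hmaps]
  refine sum_congr rfl fun m hm => ?_
  have hm' := mem_Icc.1 hm
  have hfiber : ((Icc 1 x).filter (fun n => x / n ≤ y)).filter (fun n => x / n = m)
      = Ioc (x / (m + 1)) (x / m) := by
    rw [filter_filter, ← filter_div_eq_eq_Ioc hm'.1]
    exact filter_congr fun n _ => ⟨And.right, fun h => ⟨h ▸ hm'.2, h⟩⟩
  rw [sum_congr rfl fun n hn => by rw [(mem_filter.1 hn).2], sum_const, hfiber, Nat.card_Ioc]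

theorem mul_rpow_sub_one_le_rpow_sub_rpow {p u : ℝ} (hp0 : 0 ≤ p) (hp1 : p ≤ 1)
    (hu : 1 ≤ u) :
    p * u ^ (p - 1) ≤ u ^ p - (u - 1) ^ p := by
  have hu0 : 0 < u := by linarith
  have hinv : u⁻¹ ≤ 1 := inv_le_one_of_one_le₀ hu
  have hbern := rpow_one_add_le_one_add_mul_self (s := -u⁻¹) (by linarith) hp0 hp1
  have hsub : u - 1 = u * (1 + -u⁻¹) := by field_simp; ring
  rw [hsub, mul_rpow hu0.le (by linarith), rpow_sub_one hu0.ne']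
  have hscaled := mul_le_mul_of_nonneg_left hbern (rpow_nonneg hu0.le p)
  have hexp : u ^ p * (1 + p * -u⁻¹) = u ^ p - p * (u ^ p / u) := by ring
  linarith

theorem mul_sum_Icc_rpow_sub_one_le {p : ℝ} (hp0 : 0 ≤ p) (hp1 : p ≤ 1) (N : ℕ) :
    p * ∑ n ∈ Icc 1 N, (n : ℝ) ^ (p - 1) ≤ (N : ℝ) ^ p := by
  induction N with
  | zero => simpa using rpow_nonneg le_rfl p
  | succ N ih =>
    have h := mul_rpow_sub_one_le_rpow_sub_rpow hp0 hp1 (u := N + 1) (by simp)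
    rw [add_sub_cancel_right] at h
    rw [sum_Icc_succ_top (by omega), mul_add]
    push_cast
    linarith

theorem tsum_rpow_nat_add_le {s : ℝ} (hs : s < -1) {N : ℕ} (hN : 1 ≤ N) :
    ∑' n : ℕ, ((n + N + 1 : ℕ) : ℝ) ^ s ≤ (N : ℝ) ^ (s + 1) / -(s + 1) := by
  have hN0 : (0 : ℝ) < N := by exact_mod_cast hN
  calc _ ≤ ∫ t in Set.Ioi (N : ℝ), t ^ s :=
        AntitoneOn.tsum_comp_add_le_integral N
          (fun a ha b _ hab => rpow_le_rpow_of_nonpos (hN0.trans_le ha) hab (by linarith))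
          (integrableOn_Ioi_rpow_of_lt hs hN0) fun t ht => rpow_nonneg (hN0.trans ht).le s
    _ = _ := by rw [integral_Ioi_rpow_of_lt hs hN0, neg_div, div_neg]

theorem norm_tsum_nat_add_le_of_norm_le_rpow {E : Type*} [NormedAddCommGroup E] {g : ℕ → E}
    {s c : ℝ} (hs : s < -1) (hc : 0 ≤ c) {N : ℕ} (hN : 1 ≤ N)
    (hg : ∀ m, N < m → ‖g m‖ ≤ c * (m : ℝ) ^ s) :
    ‖∑' n, g (n + N + 1)‖ ≤ c * ((N : ℝ) ^ (s + 1) / -(s + 1)) := by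
  have hsum : Summable fun n : ℕ => ((n + N + 1 : ℕ) : ℝ) ^ s :=
    (summable_nat_add_iff (N + 1)).2 (summable_nat_rpow.2 hs)
  calc _ ≤ ∑' n : ℕ, c * ((n + N + 1 : ℕ) : ℝ) ^ s :=
        tsum_of_norm_bounded (hsum.mul_left c).hasSum fun n => hg _ (by omega)
    _ ≤ _ := by
      rw [tsum_mul_left]
      exact mul_le_mul_of_nonneg_left (tsum_rpow_nat_add_le hs hN) hc

theorem log_le_mul_log_mul_rpow {x y m δ : ℝ} (hx : 2 ≤ x) (hy : 0 < y) (hyx : y ≤ x)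
    (hym : y ≤ m) (hδ : 0 < δ) :
    log m ≤ (1 + (δ * log 2)⁻¹) * log x * (m / y) ^ δ := by
  have hm : 0 < m := hy.trans_le hym
  have hr : 1 ≤ (m / y) ^ δ := one_le_rpow (by rwa [le_div_iff₀ hy, one_mul]) hδ.le
  have hl2 : 0 < log 2 := log_pos (by norm_num)
  have hlx : log 2 ≤ log x := log_le_log (by norm_num) hx
  have h1 : log m ≤ log x + log (m / y) := by
    rw [← log_mul (by positivity) (by positivity)]
    refine log_le_log hm ?_
    rw [mul_div_assoc', le_div_iff₀ hy]
    nlinarith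
  have h2 : log (m / y) ≤ (m / y) ^ δ / δ := log_le_rpow_div (by positivity) hδ
  have h3 : (m / y) ^ δ / δ ≤ (δ * log 2)⁻¹ * log x * (m / y) ^ δ := by
    calc (m / y) ^ δ / δ = (δ * log 2)⁻¹ * log 2 * (m / y) ^ δ := by field_simp
      _ ≤ _ := by gcongr
  have h4 : log x ≤ log x * (m / y) ^ δ := le_mul_of_one_le_right (by linarith) hr
  linarith

theorem le_div_mul_rpow_mul_log_rpow {a β θ x : ℝ} (ha : 0 ≤ a) (hβ : 0 ≤ β)
    (hθ : 0 ≤ θ) (hx : 2 ≤ x) : a ≤ a / (log 2) ^ θ * x ^ β * (log x) ^ θ := by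
  have hL2 : 0 < (log 2) ^ θ := rpow_pos_of_pos (log_pos one_lt_two) θ
  have hpow : 1 ≤ x ^ β := one_le_rpow (by linarith) hβ
  have hlog : (log 2) ^ θ ≤ (log x) ^ θ :=
    rpow_le_rpow (log_nonneg one_le_two) (log_le_log two_pos hx) hθ
  calc a = a / (log 2) ^ θ * (1 * (log 2) ^ θ) := by field_simp
    _ ≤ a / (log 2) ^ θ * (x ^ β * (log x) ^ θ) := by gcongr
    _ = _ := by ring

theorem natSqrt_rpow_le {x : ℕ} {p : ℝ} (hp : 0 ≤ p) :
    (Nat.sqrt x : ℝ) ^ p ≤ (x : ℝ) ^ (p / 2) := by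
  calc _ ≤ √(x : ℝ) ^ p := rpow_le_rpow (Nat.cast_nonneg _) nat_sqrt_le_real_sqrt hp
    _ = _ := by rw [sqrt_eq_rpow, ← rpow_mul (Nat.cast_nonneg _)]; ring_nf

theorem natSqrt_rpow_le_of_nonpos {x : ℕ} (hx : 1 ≤ x) {p : ℝ} (hp : p ≤ 0) :
    (Nat.sqrt x : ℝ) ^ p ≤ 2 ^ (-p) * (x : ℝ) ^ (p / 2) := by
  have hy : (1 : ℝ) ≤ Nat.sqrt x := by exact_mod_cast Nat.sqrt_pos.2 hx
  have h : √(x : ℝ) / 2 ≤ Nat.sqrt x := by linarith [real_sqrt_lt_nat_sqrt_succ (a := x)]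
  have hs : 0 < √(x : ℝ) := sqrt_pos.2 (by exact_mod_cast hx)
  calc _ ≤ (√(x : ℝ) / 2) ^ p := rpow_le_rpow_of_nonpos (by positivity) h hp
    _ = _ := by
      rw [div_rpow hs.le zero_le_two, sqrt_eq_rpow, ← rpow_mul (Nat.cast_nonneg _),
        rpow_neg zero_le_two]
      ring_nf


def HasGrowthBound (f : ℕ → ℂ) (K α θ : ℝ) : Prop :=
  ∀ n : ℕ, 2 ≤ n → ‖f n‖ ≤ K * (n : ℝ) ^ α * (log n) ^ θ

noncomputable def divMulSucc (f : ℕ → ℂ) (n : ℕ) : ℂ := f n / (n * (n + 1))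

/-- `x / (m * (m + 1)) = x / m - x / (m + 1)` is the real prediction for
`#{n ≤ x | x / n = m} = x / m - x / (m + 1)` (see `filter_div_eq_eq_Ioc`). -/
noncomputable def fiberDefect (x m : ℕ) : ℂ :=
  ((x / m - x / (m + 1) : ℕ) : ℂ) - x / (m * (m + 1))

theorem norm_fiberDefect_le_one {x m : ℕ} (hm : 1 ≤ m) : ‖fiberDefect x m‖ ≤ 1 := by
  have hm0 : (m : ℝ) ≠ 0 := by positivity
  have hsplit : (x : ℝ) / (m * (m + 1)) = x / m - x / (m + 1) := by
    field_simp
    ring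
  have hu := Nat.floor_le (R := ℝ) (a := x / m) (by positivity)
  have hu' := Nat.lt_floor_add_one (R := ℝ) (x / m)
  have hv := Nat.floor_le (R := ℝ) (a := x / (m + 1)) (by positivity)
  have hv' := Nat.lt_floor_add_one (R := ℝ) (x / (m + 1))
  have hm1 : ((m + 1 : ℕ) : ℝ) = m + 1 := by push_cast; ring
  rw [Nat.floor_div_eq_div] at hu hu'
  rw [← hm1, Nat.floor_div_eq_div] at hv hv'
  rw [hm1] at hv hv'
  have hreal : fiberDefect x m
      = ((((x / m : ℕ) : ℝ) - (x / (m + 1) : ℕ) - (x / m - x / (m + 1)) : ℝ) : ℂ) := by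
    rw [fiberDefect, Nat.cast_sub (Nat.div_le_div_left (by omega) (by omega)), ← hsplit]
    push_cast
    ring
  rw [hreal, Complex.norm_real, Real.norm_eq_abs, abs_le]
  constructor <;> linarith

theorem norm_divMulSucc_le (f : ℕ → ℂ) {m : ℕ} (hm : 1 ≤ m) :
    ‖divMulSucc f m‖ ≤ ‖f m‖ * (m : ℝ) ^ (-2 : ℝ) := by
  have hm0 : (0 : ℝ) < m := by exact_mod_cast hm
  have hden : (m : ℂ) * (m + 1) = ((m * (m + 1) : ℕ) : ℂ) := by push_cast; ring
  rw [divMulSucc, norm_div, hden, Complex.norm_natCast, rpow_neg hm0.le, rpow_two,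
    ← div_eq_mul_inv]
  push_cast
  gcongr
  linarith

theorem sum_div_sub_mul_tsum_eq (f : ℕ → ℂ) (x y : ℕ) (hsum : Summable (divMulSucc f)) :
    ∑ n ∈ Icc 1 x, f (x / n) - x * ∑' n, divMulSucc f n
      = ∑ n ∈ (Icc 1 x).filter (fun n => y < x / n), f (x / n)
        + ∑ m ∈ Icc 1 y, fiberDefect x m * f m
        - x * ∑' n, divMulSucc f (n + y + 1) := by
  have hsplit : ∑ n ∈ Icc 1 x, f (x / n)
      = ∑ m ∈ Icc 1 y, ((x / m - x / (m + 1) : ℕ) : ℂ) * f m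
        + ∑ n ∈ (Icc 1 x).filter (fun n => y < x / n), f (x / n) := by
    rw [← sum_filter_add_sum_filter_not (Icc 1 x) (fun n => x / n ≤ y), sum_filter_div_le_eq]
    simp only [nsmul_eq_mul, not_le]
  have htsum : ∑' n, divMulSucc f n
      = ∑ m ∈ Icc 1 y, divMulSucc f m + ∑' n, divMulSucc f (n + y + 1) := by
    have hzero : divMulSucc f 0 = 0 := by simp [divMulSucc]
    rw [← hsum.sum_add_tsum_nat_add (y + 1), range_eq_Ico,
      sum_eq_sum_Ico_succ_bot (Nat.succ_pos y), hzero, zero_add]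
    rfl
  have hcompare : ∑ m ∈ Icc 1 y, fiberDefect x m * f m
      = ∑ m ∈ Icc 1 y, ((x / m - x / (m + 1) : ℕ) : ℂ) * f m
        - x * ∑ m ∈ Icc 1 y, divMulSucc f m := by
    rw [mul_sum, ← sum_sub_distrib]
    refine sum_congr rfl fun m _ => ?_
    simp only [fiberDefect, divMulSucc]
    ring
  rw [hsplit, htsum, hcompare]
  ring

section GrowthBound

variable {f : ℕ → ℂ} {K α θ : ℝ}

theorem HasGrowthBound.norm_le (hf : HasGrowthBound f K α θ) (hK : 0 ≤ K) (hθ : 0 ≤ θ)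
    {k : ℕ} {x : ℝ} (hk : 2 ≤ k) (hkx : (k : ℝ) ≤ x) :
    ‖f k‖ ≤ K * (k : ℝ) ^ α * (log x) ^ θ := by
  refine (hf k hk).trans ?_
  gcongr

theorem HasGrowthBound.norm_sum_filter_natSqrt_lt_div_le (hf : HasGrowthBound f K α θ)
    (hK : 0 ≤ K) (hα0 : 0 ≤ α) (hα1 : α < 1) (hθ : 0 ≤ θ) {x : ℕ} (hx : 2 ≤ x) :
    ‖∑ n ∈ (Icc 1 x).filter (fun n => Nat.sqrt x < x / n), f (x / n)‖
      ≤ K / (1 - α) * (x : ℝ) ^ ((α + 1) / 2) * (log x) ^ θ := by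
  set y := Nat.sqrt x
  have hy : 1 ≤ y := Nat.sqrt_pos.2 (by omega)
  have hx0 : (0 : ℝ) < x := by positivity
  have hsub : (Icc 1 x).filter (fun n => y < x / n) ⊆ Icc 1 y := by
    intro n hn
    simp only [mem_filter, mem_Icc] at hn ⊢
    refine ⟨hn.1.1, ?_⟩
    by_contra! hyn
    have h1 : x / n ≤ x / (y + 1) := Nat.div_le_div_left hyn (by omega)
    have h2 : x / (y + 1) < y + 1 := Nat.div_lt_of_lt_mul (Nat.lt_succ_sqrt x)
    omega
  have hterm : ∀ n ∈ (Icc 1 x).filter (fun n => y < x / n),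
      ‖f (x / n)‖ ≤ K * (x : ℝ) ^ α * (log x) ^ θ * (n : ℝ) ^ (-α) := by
    intro n hn
    simp only [mem_filter, mem_Icc] at hn
    have hn0 : (0 : ℝ) < n := by exact_mod_cast hn.1.1
    have hq : ((x / n : ℕ) : ℝ) ≤ x / n := Nat.cast_div_le
    calc ‖f (x / n)‖ ≤ K * ((x / n : ℕ) : ℝ) ^ α * (log x) ^ θ :=
          hf.norm_le hK hθ (by omega) (hq.trans (div_le_self hx0.le (by exact_mod_cast hn.1.1)))
      _ ≤ K * ((x : ℝ) / n) ^ α * (log x) ^ θ := by gcongr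
      _ = _ := by rw [div_rpow hx0.le hn0.le, rpow_neg hn0.le]; ring
  have hpow : ∑ n ∈ Icc 1 y, (n : ℝ) ^ (-α) ≤ (y : ℝ) ^ (1 - α) / (1 - α) := by
    have h := mul_sum_Icc_rpow_sub_one_le (p := 1 - α) (by linarith) (by linarith) y
    rw [sub_sub_cancel_left] at h
    rw [le_div_iff₀ (by linarith)]
    linarith
  calc _ ≤ ∑ n ∈ (Icc 1 x).filter (fun n => y < x / n), ‖f (x / n)‖ := norm_sum_le _ _
    _ ≤ ∑ n ∈ (Icc 1 x).filter (fun n => y < x / n),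
          K * (x : ℝ) ^ α * (log x) ^ θ * (n : ℝ) ^ (-α) := sum_le_sum hterm
    _ ≤ ∑ n ∈ Icc 1 y, K * (x : ℝ) ^ α * (log x) ^ θ * (n : ℝ) ^ (-α) :=
          sum_le_sum_of_subset_of_nonneg hsub fun _ _ _ => by positivity
    _ ≤ K * (x : ℝ) ^ α * (log x) ^ θ * ((y : ℝ) ^ (1 - α) / (1 - α)) := by
          rw [← mul_sum]; gcongr
    _ ≤ K * (x : ℝ) ^ α * (log x) ^ θ * ((x : ℝ) ^ ((1 - α) / 2) / (1 - α)) := by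
          gcongr
          exact natSqrt_rpow_le (by linarith)
    _ = _ := by
          rw [show (α + 1) / 2 = α + (1 - α) / 2 by ring, rpow_add hx0]
          ring

theorem HasGrowthBound.norm_sum_Icc_natSqrt_le (hf : HasGrowthBound f K α θ) (hK : 0 ≤ K)
    (hα0 : 0 ≤ α) (hθ : 0 ≤ θ) {x : ℕ} (hx : 2 ≤ x) :
    ‖∑ m ∈ Icc 1 (Nat.sqrt x), fiberDefect x m * f m‖
      ≤ ‖f 1‖ + K * (x : ℝ) ^ ((α + 1) / 2) * (log x) ^ θ := by
  set y := Nat.sqrt x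
  have hy : 1 ≤ y := Nat.sqrt_pos.2 (by omega)
  have hyx : (y : ℝ) ≤ x := by exact_mod_cast Nat.sqrt_le_self x
  have hterm : ∀ m ∈ Icc 1 y,
      ‖fiberDefect x m * f m‖ ≤ ‖f m‖ := by
    intro m hm
    rw [norm_mul]
    exact mul_le_of_le_one_left (norm_nonneg _) (norm_fiberDefect_le_one (mem_Icc.1 hm).1)
  have hlarge : ∀ m ∈ Ioc 1 y, ‖f m‖ ≤ K * (y : ℝ) ^ α * (log x) ^ θ := by
    intro m hm
    have hmy : (m : ℝ) ≤ y := by exact_mod_cast (mem_Ioc.1 hm).2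
    calc ‖f m‖ ≤ K * (m : ℝ) ^ α * (log x) ^ θ :=
          hf.norm_le hK hθ (mem_Ioc.1 hm).1 (hmy.trans hyx)
      _ ≤ K * (y : ℝ) ^ α * (log x) ^ θ := by gcongr
  have hcard : ((Ioc 1 y).card : ℝ) ≤ y := by
    rw [Nat.card_Ioc]; exact_mod_cast Nat.sub_le y 1
  calc _ ≤ ∑ m ∈ Icc 1 y, ‖f m‖ := (norm_sum_le _ _).trans (sum_le_sum hterm)
    _ = ‖f 1‖ + ∑ m ∈ Ioc 1 y, ‖f m‖ := (add_sum_Ioc_eq_sum_Icc hy).symm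
    _ ≤ ‖f 1‖ + (y : ℝ) * (K * (y : ℝ) ^ α * (log x) ^ θ) := by
          grw [sum_le_card_nsmul _ _ _ hlarge, nsmul_eq_mul, hcard]
    _ = ‖f 1‖ + K * (y : ℝ) ^ (1 + α) * (log x) ^ θ := by
          rw [rpow_add (by positivity), rpow_one]; ring
    _ ≤ ‖f 1‖ + K * (x : ℝ) ^ ((α + 1) / 2) * (log x) ^ θ := by
          rw [add_comm 1 α]; gcongr; exact natSqrt_rpow_le (by linarith)

theorem HasGrowthBound.exists_norm_divMulSucc_le (hf : HasGrowthBound f K α θ) (hK : 0 ≤ K)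
    (hα1 : α < 1) (hθ : 0 ≤ θ) :
    ∃ s < -1, ∃ c ≥ 0, ∀ x y m : ℕ, 2 ≤ x → 1 ≤ y → y ≤ x → y < m →
      ‖divMulSucc f m‖ ≤ c * (log x) ^ θ * (y : ℝ) ^ (α - 2 - s) * (m : ℝ) ^ s := by
  -- any `δ > 0` with `δ * θ < 1 - α` would do
  set δ := (1 - α) / (2 * (θ + 1))
  have hδ : 0 < δ := div_pos (by linarith) (by positivity)
  have hδθ : δ * θ < 1 - α := by
    rw [div_mul_eq_mul_div, div_lt_iff₀ (by positivity)]
    nlinarith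
  set c₀ := 1 + (δ * log 2)⁻¹
  refine ⟨α - 2 + δ * θ, by linarith, K * c₀ ^ θ, by positivity,
    fun x y m hx hy hyx hym => ?_⟩
  have hy0 : (0 : ℝ) < y := by exact_mod_cast hy
  have hm0 : (0 : ℝ) < m := by exact_mod_cast (by omega : 0 < m)
  have hlog : (log m) ^ θ ≤ c₀ ^ θ * (log x) ^ θ * (m / y) ^ (δ * θ) := by
    have hle := log_le_mul_log_mul_rpow (x := x) (m := m) (by exact_mod_cast hx) hy0
      (by exact_mod_cast hyx) (by exact_mod_cast hym.le) hδ
    calc (log m) ^ θ ≤ (c₀ * log x * (m / y) ^ δ) ^ θ :=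
          rpow_le_rpow (log_nonneg (by exact_mod_cast (by omega : 1 ≤ m))) hle hθ
      _ = _ := by
          rw [mul_rpow (by positivity) (by positivity), mul_rpow (by positivity)
            (log_nonneg (by exact_mod_cast (by omega : 1 ≤ x))), ← rpow_mul (by positivity)]
  calc ‖divMulSucc f m‖
        ≤ ‖f m‖ * (m : ℝ) ^ (-2 : ℝ) := norm_divMulSucc_le f (by omega)
    _ ≤ K * (m : ℝ) ^ α * (log m) ^ θ * (m : ℝ) ^ (-2 : ℝ) := by
          gcongr; exact hf m (by omega)
    _ ≤ K * (m : ℝ) ^ α * (c₀ ^ θ * (log x) ^ θ * (m / y) ^ (δ * θ))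
          * (m : ℝ) ^ (-2 : ℝ) := by
          gcongr
    _ = _ := by
          rw [div_rpow hm0.le hy0.le, show α - 2 - (α - 2 + δ * θ) = -(δ * θ) by ring,
            rpow_neg hy0.le, rpow_add hm0, rpow_sub hm0, rpow_neg hm0.le]
          ring

theorem HasGrowthBound.summable_divMulSucc (hf : HasGrowthBound f K α θ) (hK : 0 ≤ K)
    (hα1 : α < 1) (hθ : 0 ≤ θ) : Summable (divMulSucc f) := by
  obtain ⟨s, hs, c, -, hmaj⟩ := hf.exists_norm_divMulSucc_le hK hα1 hθ
  refine Summable.of_norm_bounded_eventually_nat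
    ((summable_nat_rpow.2 hs).mul_left (c * (log 2) ^ θ)) ?_
  filter_upwards [Filter.eventually_gt_atTop 1] with m hm
  simpa using hmaj 2 1 m le_rfl le_rfl one_le_two hm

theorem HasGrowthBound.exists_mul_norm_tsum_tail_le (hf : HasGrowthBound f K α θ) (hK : 0 ≤ K)
    (hα1 : α < 1) (hθ : 0 ≤ θ) :
    ∃ c ≥ 0, ∀ x : ℕ, 2 ≤ x →
      x * ‖∑' n, divMulSucc f (n + Nat.sqrt x + 1)‖
        ≤ c * (x : ℝ) ^ ((α + 1) / 2) * (log x) ^ θ := by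
  obtain ⟨s, hs, c, hc, hmaj⟩ := hf.exists_norm_divMulSucc_le hK hα1 hθ
  have hs1 : 0 < -(s + 1) := by linarith
  refine ⟨c / -(s + 1) * 2 ^ (1 - α), by positivity, fun x hx => ?_⟩
  set y := Nat.sqrt x
  have hy : 1 ≤ y := Nat.sqrt_pos.2 (by omega)
  have hx0 : (0 : ℝ) < x := by positivity
  have hy0 : (0 : ℝ) < y := by exact_mod_cast hy
  have hlog : 0 ≤ log x := log_nonneg (by exact_mod_cast (by omega : 1 ≤ x))
  have htail := norm_tsum_nat_add_le_of_norm_le_rpow hs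
    (c := c * (log x) ^ θ * (y : ℝ) ^ (α - 2 - s)) (by positivity) hy
    fun m hm => hmaj x y m hx hy (Nat.sqrt_le_self x) hm
  have hyα := natSqrt_rpow_le_of_nonpos (x := x) (by omega) (p := α - 1) (by linarith)
  calc _ ≤ (x : ℝ) * (c * (log x) ^ θ * (y : ℝ) ^ (α - 2 - s)
          * ((y : ℝ) ^ (s + 1) / -(s + 1))) := by
        gcongr
    _ = c / -(s + 1) * (log x) ^ θ * (x * (y : ℝ) ^ (α - 1)) := by
        have hsplit : (y : ℝ) ^ (α - 1) = (y : ℝ) ^ (α - 2 - s) * (y : ℝ) ^ (s + 1) := by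
          rw [← rpow_add hy0]; ring_nf
        rw [hsplit]
        ring
    _ ≤ c / -(s + 1) * (log x) ^ θ * (x * (2 ^ (-(α - 1)) * (x : ℝ) ^ ((α - 1) / 2))) := by
        gcongr
    _ = _ := by
        rw [show (α + 1) / 2 = (α - 1) / 2 + 1 by ring, rpow_add_one hx0.ne', neg_sub]
        ring

end GrowthBound

end WuZhai

open WuZhai

theorem wu_zhai_lemma (f : ℕ → ℂ) (α θ K : ℝ)
    (hα0 : 0 ≤ α) (hα1 : α < 1) (hθ : 0 ≤ θ) (hK : 0 < K)
    (hf : ∀ n : ℕ, 2 ≤ n → ‖f n‖ ≤ K * (n : ℝ) ^ α * (Real.log n) ^ θ) :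
    ∃ C > (0:ℝ), ∀ x : ℕ, 2 ≤ x →
      ‖(∑ n ∈ Finset.Icc 1 x, f (x / n)) -
          (x : ℂ) * ∑' n : ℕ, f n / ((n : ℂ) * ((n : ℂ) + 1))‖
        ≤ C * (x : ℝ) ^ ((α + 1) / 2) * (Real.log x) ^ θ := by
  replace hf : HasGrowthBound f K α θ := hf
  obtain ⟨c, hc, htail⟩ := hf.exists_mul_norm_tsum_tail_le hK.le hα1 hθ
  have h1α : 0 < 1 - α := by linarith
  refine ⟨K / (1 - α) + K + c + ‖f 1‖ / (log 2) ^ θ, by positivity, fun x hx => ?_⟩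
  have hf1 := le_div_mul_rpow_mul_log_rpow (norm_nonneg (f 1)) (by linarith : 0 ≤ (α + 1) / 2)
    hθ (by exact_mod_cast hx : (2 : ℝ) ≤ x)
  change ‖_ - _ * ∑' n, divMulSucc f n‖ ≤ _
  rw [sum_div_sub_mul_tsum_eq f x (Nat.sqrt x) (hf.summable_divMulSucc hK.le hα1 hθ)]
  calc _ ≤ ‖∑ n ∈ (Icc 1 x).filter (fun n => Nat.sqrt x < x / n), f (x / n)‖
        + ‖∑ m ∈ Icc 1 (Nat.sqrt x), fiberDefect x m * f m‖
        + x * ‖∑' n, divMulSucc f (n + Nat.sqrt x + 1)‖ := by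
        grw [norm_sub_le, norm_add_le, norm_mul, Complex.norm_natCast]
    _ ≤ K / (1 - α) * (x : ℝ) ^ ((α + 1) / 2) * (log x) ^ θ
        + (‖f 1‖ + K * (x : ℝ) ^ ((α + 1) / 2) * (log x) ^ θ)
        + c * (x : ℝ) ^ ((α + 1) / 2) * (log x) ^ θ := by
        grw [hf.norm_sum_filter_natSqrt_lt_div_le hK.le hα0 hα1 hθ hx,
          hf.norm_sum_Icc_natSqrt_le hK.le hα0 hθ hx, htail x hx]
    _ ≤ _ := by linarith
end

section
/- Let x be a prime number and let p be a prime with p ≠ x such that ⌊x/n⌋ = p for some integer n with 1 ≤ n ≤ x. Then there exists an integer m with 1 ≤ m ≤ x−1 and ⌊(x−1)/m⌋ = p. -/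
theorem prime_value_descends (x p : ℕ) (hx : x.Prime) (hp : p.Prime) (hne : p ≠ x)
    (h : ∃ n : ℕ, 1 ≤ n ∧ n ≤ x ∧ x / n = p) :
    ∃ m : ℕ, 1 ≤ m ∧ m ≤ x - 1 ∧ (x - 1) / m = p := by
  obtain ⟨n, h1, h2, h3⟩ := h
  have hp2 := hp.two_le
  have hx2 := hx.two_le
  have hle : p * n ≤ x := by
    calc p * n = x / n * n := by rw [h3]
    _ ≤ x := Nat.div_mul_le_self x n
  have hlt : x < (p + 1) * n := by
    have : x / n < p + 1 := by omega
    exact (Nat.div_lt_iff_lt_mul (by omega)).mp this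
  have hne2 : p * n ≠ x := by
    intro he
    have hdvd : p ∣ x := ⟨n, he.symm⟩
    rcases (hx.eq_one_or_self_of_dvd p hdvd) with h' | h' <;> omega
  have h2n : 2 * n ≤ p * n := Nat.mul_le_mul_right n hp2
  refine ⟨n, h1, by omega, Nat.div_eq_of_lt_le (by omega) (by omega)⟩
end

section
/- Let x be a prime number with x ≠ 3, and let p be a prime such that ⌊(x−1)/n⌋ = p for some integer n with 1 ≤ n ≤ x−1. Then there exists an integer m with 1 ≤ m ≤ x and ⌊x/m⌋ = p. -/
theorem prime_value_ascends (x p : ℕ) (hx : x.Prime) (hx3 : x ≠ 3) (hp : p.Prime)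
    (h : ∃ n : ℕ, 1 ≤ n ∧ n ≤ x - 1 ∧ (x - 1) / n = p) :
    ∃ m : ℕ, 1 ≤ m ∧ m ≤ x ∧ x / m = p := by
  obtain ⟨n, hn1, hn2, hnp⟩ := h
  have hx2 : 2 ≤ x := hx.two_le
  have hnx : n < x := lt_of_le_of_lt hn2 (by omega)
  rcases eq_or_lt_of_le hn1 with h1 | h1
  · -- n = 1, then p = x - 1 prime, x prime → x = 3, contradiction
    exfalso
    have hpx : p = x - 1 := by
      subst h1; rw [Nat.div_one] at hnp; omega
    subst hpx
    have h2 : (x - 1) % 2 = 0 ∨ x % 2 = 0 := by omega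
    rcases h2 with h2 | h2
    · have := (hp.eq_one_or_self_of_dvd 2 (Nat.dvd_of_mod_eq_zero h2))
      omega
    · have := (hx.eq_one_or_self_of_dvd 2 (Nat.dvd_of_mod_eq_zero h2))
      have := hp.two_le
      omega
  · -- n ≥ 2, n < x, so n ∤ x since x prime
    have hndvd : ¬ n ∣ x := by
      intro hd
      rcases (hx.eq_one_or_self_of_dvd n hd) with h | h <;> omega
    refine ⟨n, hn1, by omega, ?_⟩
    have hxe : x = (x - 1) + 1 := by omega
    rw [hxe, Nat.succ_div, if_neg (by rwa [← hxe]), hnp]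
    omega
end

section
/- Let x = p·q where p and q are odd primes, and let r be a prime with r ≠ p and r ≠ q. Then there exists an integer n with 1 ≤ n ≤ x and ⌊x/n⌋ = r if and only if there exists an integer m with 1 ≤ m ≤ x−1 and ⌊(x−1)/m⌋ = r. -/
theorem semiprime_other_prime_iff (p q r x : ℕ) (hp : p.Prime) (hq : q.Prime)
    (hop : Odd p) (hoq : Odd q) (hr : r.Prime) (hrp : r ≠ p) (hrq : r ≠ q)
    (hx : x = p * q) :
    (∃ n : ℕ, 1 ≤ n ∧ n ≤ x ∧ x / n = r) ↔
      (∃ m : ℕ, 1 ≤ m ∧ m ≤ x - 1 ∧ (x - 1) / m = r) := by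
  have hp2 := hp.two_le
  have hq2 := hq.two_le
  have hx1 : 1 ≤ x := by subst hx; nlinarith
  have key : ∀ n : ℕ, x / n = (x - 1) / n + if n ∣ x then 1 else 0 := by
    intro n
    conv_lhs => rw [← Nat.succ_pred_eq_of_pos hx1]
    rw [Nat.succ_div]
    congr 1
    have : x.pred + 1 = x := Nat.succ_pred_eq_of_pos hx1
    rw [this]
  constructor
  · rintro ⟨n, h1, h2, h3⟩
    by_cases hd : n ∣ x
    · exfalso
      have hrdvd : r ∣ x := h3 ▸ Nat.div_dvd_of_dvd hd
      rw [hx] at hrdvd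
      rcases (Nat.Prime.dvd_mul hr).mp hrdvd with h | h
      · exact hrp ((Nat.prime_dvd_prime_iff_eq hr hp).mp h)
      · exact hrq ((Nat.prime_dvd_prime_iff_eq hr hq).mp h)
    · refine ⟨n, h1, ?_, ?_⟩
      · have : n ≠ x := by rintro rfl; exact hd dvd_rfl
        omega
      · have := key n
        simp [hd] at this
        omega
  · rintro ⟨m, h1, h2, h3⟩
    by_cases hd : m ∣ x
    · -- x / m = r + 1, so (r+1) ∣ x, x odd ⇒ r+1 odd ⇒ r = 2, then 3 ∣ p*q
      have hxm : x / m = r + 1 := by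
        have := key m
        simp [hd] at this
        omega
      have hdvd : (r + 1) ∣ x := hxm ▸ Nat.div_dvd_of_dvd hd
      have hxodd : Odd x := hx ▸ hop.mul hoq
      have hr2 : r = 2 := by
        rcases Nat.even_or_odd r with he | ho
        · exact (Nat.Prime.even_iff hr).mp he
        · exfalso
          have : Even (r + 1) := Odd.add_one ho
          have : (2 : ℕ) ∣ x := dvd_trans this.two_dvd hdvd
          rw [Nat.odd_iff] at hxodd
          omega
      subst hr2
      have h3dvd : (3 : ℕ) ∣ p * q := hx ▸ hdvd
      have h3 : Nat.Prime 3 := by norm_num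
      have hpq3 : p = 3 ∨ q = 3 := by
        rcases (Nat.Prime.dvd_mul h3).mp h3dvd with h | h
        · exact Or.inl ((Nat.prime_dvd_prime_iff_eq h3 hp).mp h).symm
        · exact Or.inr ((Nat.prime_dvd_prime_iff_eq h3 hq).mp h).symm
      rcases hpq3 with h | h
      · refine ⟨q + 1, by omega, by subst hx h; nlinarith, ?_⟩
        subst hx h
        exact Nat.div_eq_of_lt_le (by nlinarith) (by nlinarith)
      · refine ⟨p + 1, by omega, by subst hx h; nlinarith, ?_⟩
        subst hx h
        exact Nat.div_eq_of_lt_le (by nlinarith) (by nlinarith)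
    · refine ⟨m, h1, by omega, ?_⟩
      have := key m
      simp [hd] at this
      omega
end

section
/- Let p < q be odd primes and let x = p·q. Then: (i) there exists an integer m with 1 ≤ m ≤ x−1 and ⌊(x−1)/m⌋ = p (namely m = q−1); and (ii) there is no integer m with 1 ≤ m ≤ x−1 and ⌊(x−1)/m⌋ = q. -/
theorem semiprime_distinct_case (p q x : ℕ) (hp : p.Prime) (hq : q.Prime)
    (hop : Odd p) (hoq : Odd q) (hpq : p < q) (hx : x = p * q) :
    (∃ m : ℕ, 1 ≤ m ∧ m ≤ x - 1 ∧ (x - 1) / m = p ∧ m = q - 1) ∧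
      ¬ ∃ m : ℕ, 1 ≤ m ∧ m ≤ x - 1 ∧ (x - 1) / m = q := by
  have hp3 : 3 ≤ p := by
    have h2 := hp.two_le
    have : p ≠ 2 := by rintro rfl; exact (Nat.not_odd_iff_even.mpr even_two) hop
    omega
  have hq3 : 4 ≤ q := by omega
  subst hx
  have key : p * q = p * (q - 1) + p := by
    rw [Nat.mul_sub_one]; have : p ≤ p * q := Nat.le_mul_of_pos_right _ (by omega); omega
  have hge : q - 1 ≤ p * (q - 1) := Nat.le_mul_of_pos_left _ (by omega)
  constructor
  · refine ⟨q - 1, by omega, by omega, ?_, rfl⟩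
    apply Nat.div_eq_of_lt_le
    · omega
    · have : (p + 1) * (q - 1) = p * (q - 1) + (q - 1) := by ring
      omega
  · rintro ⟨m, h1, h2, h3⟩
    have hlo : q * m ≤ p * q - 1 := by
      calc q * m = (p * q - 1) / m * m := by rw [h3]
        _ ≤ p * q - 1 := Nat.div_mul_le_self _ _
    have hhi : p * q - 1 < (q + 1) * m := by
      rw [← Nat.div_lt_iff_lt_mul (by omega)]
      omega
    have hm : m ≤ p - 1 := by
      have : q * m < q * p := by
        have : p * q = q * p := Nat.mul_comm _ _
        omega
      have := Nat.lt_of_mul_lt_mul_left this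
      omega
    have h5 : (q + 1) * m ≤ (q + 1) * (p - 1) := Nat.mul_le_mul_left _ hm
    have h6 : (q + 1) * (p - 1) = q * (p - 1) + (p - 1) := by ring
    have h7 : q * (p - 1) = q * p - q := by
      rw [Nat.mul_sub_one]
    have h8 : q * p = p * q := Nat.mul_comm _ _
    omega
end
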